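/- In the Musical Chairs seating process with $N$ target cells and $N$ players, if $u \in \{1,\dots,N\}$ players are unseated (so exactly $u$ cells are free) and each unseated player independently picks a cell uniformly at random from the $N$ cells, then the expected number of players that become seated in this round equals $\Delta(u) = \frac{u^2}{N}\left(1-\frac{1}{N}\right)^{u-1}$. -/

import Mathlib

/-!
Count by cells instead of by players. A free cell `c` gains a seated player exactly when one
unseated player picks it; fixing who that player is, the others pick among the `N - 1` other
cells, so `u (N - 1)^(u - 1)` of the `N^u` choice profiles seat someone at `c`. Summing over
the `u` free cells and dividing by `N^u` gives `(u²/N) (1 - 1/N)^(u - 1)`.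
-/

open Finset

section
variable {ι α : Type*} [Fintype ι] [DecidableEq ι] [Fintype α] [DecidableEq α]

lemma filter_eq_singleton_iff_mem_piFinset (f : ι → α) (c : α) (i : ι) :
    ({j | f j = c} : Finset ι) = {i} ↔
      f ∈ Fintype.piFinset (Function.update (fun _ ↦ ({c}ᶜ : Finset α)) i {c}) := by
  simp only [Fintype.mem_piFinset, Finset.ext_iff, mem_filter, mem_univ, true_and, mem_singleton]
  refine forall_congr' fun j ↦ ?_
  rcases eq_or_ne j i with rfl | hj <;> simp [*]

lemma card_piFinset_update_compl_singleton (c : α) (i : ι) :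
    #(Fintype.piFinset (Function.update (fun _ ↦ ({c}ᶜ : Finset α)) i {c})) =
      (Fintype.card α - 1) ^ (Fintype.card ι - 1) := by
  simp only [Fintype.card_piFinset, Function.apply_update (fun _ ↦ card),
    prod_update_of_mem (mem_univ i)]
  simp [card_compl, card_univ_sdiff]

theorem card_filter_card_fiber_eq_one (c : α) :
    #{f : ι → α | #{i | f i = c} = 1} =
      Fintype.card ι * (Fintype.card α - 1) ^ (Fintype.card ι - 1) := by
  have hunion : ({f : ι → α | #{i | f i = c} = 1} : Finset _) = univ.biUnion fun i ↦
      Fintype.piFinset (Function.update (fun _ ↦ ({c}ᶜ : Finset α)) i {c}) := by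
    ext f
    simp only [mem_filter, mem_univ, true_and, card_eq_one, mem_biUnion,
      filter_eq_singleton_iff_mem_piFinset]
  rw [hunion, card_biUnion]
  · simp only [card_piFinset_update_compl_singleton, sum_const, card_univ, smul_eq_mul]
  · intro i _ i' _ hii'
    refine disjoint_left.2 fun f hi hi' ↦ hii' (singleton_injective ?_)
    rw [← filter_eq_singleton_iff_mem_piFinset] at hi hi'
    exact hi.symm.trans hi'

end

lemma mul_mul_sub_one_pow_div_pow (x : ℝ) (u : ℕ) :
    u * (u * (x - 1) ^ (u - 1)) / x ^ u = u ^ 2 / x * (1 - 1 / x) ^ (u - 1) := by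
  rcases u with _ | k
  · simp
  rcases eq_or_ne x 0 with rfl | hx
  · simp
  rw [Nat.add_sub_cancel, one_sub_div hx, div_pow, pow_succ]
  field_simp

theorem musical_chairs_drift_formula_general
    (N u : ℕ)
    (F : Finset (Fin N)) (hF : F.card = u) :
    (∑ f : Fin u → Fin N,
        ((F.filter (fun c =>
          (Finset.univ.filter (fun i : Fin u => f i = c)).card = 1)).card : ℝ))
      / (N : ℝ) ^ u
    = ((u : ℝ) ^ 2 / N) * (1 - 1 / (N : ℝ)) ^ (u - 1) := by
  have hcell : ∀ c : Fin N,
      (#{f : Fin u → Fin N | #{i | f i = c} = 1} : ℝ) = u * ((N : ℝ) - 1) ^ (u - 1) := fun c ↦ by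
    simp [card_filter_card_fiber_eq_one, Nat.cast_sub c.pos]
  have hswap : ∑ f : Fin u → Fin N, #{c ∈ F | #{i | f i = c} = 1} =
      ∑ c ∈ F, #{f : Fin u → Fin N | #{i | f i = c} = 1} :=
    sum_card_bipartiteAbove_eq_sum_card_bipartiteBelow _
  rw [← Nat.cast_sum, hswap, Nat.cast_sum]
  simp only [hcell, sum_const, hF, nsmul_eq_mul]
  exact mul_mul_sub_one_pow_div_pow N u

/-- In Musical Chairs with `N` cells and a set `F` of `u` free cells,
when `u` unseated players each pick a cell uniformly from all `N` cells independently,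
the expected number of newly seated players (free cells picked by exactly one
unseated player) equals `(u^2/N)(1-1/N)^(u-1)`. -/
theorem musical_chairs_drift_formula
    (N u : ℕ) (hu : 1 ≤ u) (huN : u ≤ N)
    (F : Finset (Fin N)) (hF : F.card = u) :
    (∑ f : Fin u → Fin N,
        ((F.filter (fun c =>
          (Finset.univ.filter (fun i : Fin u => f i = c)).card = 1)).card : ℝ))
      / (N : ℝ) ^ u
    = ((u : ℝ) ^ 2 / N) * (1 - 1 / (N : ℝ)) ^ (u - 1) :=
  musical_chairs_drift_formula_general N u F hF
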